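/- Let (X, d, ≪, ≤, τ) be a strongly causal Lorentzian length space. Then for every x ∈ X and every localising neighbourhood Ω of x with local time separation function ω, there exists a neighbourhood U of x with U ⊆ Ω such that ω(p,q) = τ(p,q) for all p, q ∈ U. In particular, τ is continuous on a neighbourhood of the diagonal in X × X. -/

import Mathlib

open scoped ENNReal NNReal Topology
open Set

universe u v

/-- A *Lorentzian pre-length space* `(X, d, ≪, ≤, τ)`: a metric space `(X,d)` together with a
preorder `≤` (`causal`), a transitive relation `≪` (`chron`) contained in `≤`, and a lower
semicontinuous time separation function `τ : X × X → [0,∞]` satisfying the reverse triangle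
inequality, `τ(x,y) = 0` if `x ≰ y`, and `τ(x,y) > 0 ↔ x ≪ y`. -/
structure LorentzianPreLength (X : Type u) [MetricSpace X] : Type u where
  chron : X → X → Prop
  causal : X → X → Prop
  causal_refl : ∀ x, causal x x
  causal_trans : ∀ {x y z}, causal x y → causal y z → causal x z
  chron_trans : ∀ {x y z}, chron x y → chron y z → chron x z
  chron_le_causal : ∀ {x y}, chron x y → causal x y
  tau : X → X → ℝ≥0∞
  tau_lsc : LowerSemicontinuous fun p : X × X => tau p.1 p.2
  tau_rev_triangle : ∀ {x y z}, causal x y → causal y z → tau x y + tau y z ≤ tau x z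
  tau_eq_zero : ∀ {x y}, ¬ causal x y → tau x y = 0
  tau_pos_iff_chron : ∀ {x y}, 0 < tau x y ↔ chron x y

namespace LorentzianPreLength

variable {X : Type u} [MetricSpace X] (L : LorentzianPreLength X)

/-- The chronological future `I⁺(x) = {y | x ≪ y}`. -/
def chronFuture (x : X) : Set X := {y | L.chron x y}

/-- The chronological past `I⁻(x) = {y | y ≪ x}`. -/
def chronPast (x : X) : Set X := {y | L.chron y x}

/-- A future-directed causal curve on the (interval) `I`: locally Lipschitz, non-constant, and
any two of its points are causally related in the direction of the parametrisation. -/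
def IsCausalOn (γ : ℝ → X) (I : Set ℝ) : Prop :=
  (∀ c d : ℝ, c ≤ d → Icc c d ⊆ I → ∃ K : ℝ≥0, LipschitzOnWith K γ (Icc c d)) ∧
  (∀ ⦃s t : ℝ⦄, s ∈ I → t ∈ I → s < t → L.causal (γ s) (γ t)) ∧
  (∃ s ∈ I, ∃ t ∈ I, γ s ≠ γ t)

/-- A future-directed timelike curve. -/
def IsTimelikeOn (γ : ℝ → X) (I : Set ℝ) : Prop :=
  L.IsCausalOn γ I ∧ ∀ ⦃s t : ℝ⦄, s ∈ I → t ∈ I → s < t → L.chron (γ s) (γ t)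

/-- A past-directed causal curve. -/
def IsPdCausalOn (γ : ℝ → X) (I : Set ℝ) : Prop :=
  (∀ c d : ℝ, c ≤ d → Icc c d ⊆ I → ∃ K : ℝ≥0, LipschitzOnWith K γ (Icc c d)) ∧
  (∀ ⦃s t : ℝ⦄, s ∈ I → t ∈ I → s < t → L.causal (γ t) (γ s)) ∧
  (∃ s ∈ I, ∃ t ∈ I, γ s ≠ γ t)

/-- A past-directed timelike curve. -/
def IsPdTimelikeOn (γ : ℝ → X) (I : Set ℝ) : Prop :=
  L.IsPdCausalOn γ I ∧ ∀ ⦃s t : ℝ⦄, s ∈ I → t ∈ I → s < t → L.chron (γ t) (γ s)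

/-- `t : ℕ → ℝ` is a partition `c = t₀ < t₁ < ⋯ < t_N = d`. -/
def IsPartition (c d : ℝ) (N : ℕ) (t : ℕ → ℝ) : Prop :=
  t 0 = c ∧ t N = d ∧ ∀ i < N, t i < t (i + 1)

/-- The `τ`-length of a curve on `[c,d]`:
`L_τ(γ) = inf { Σ τ(γ(tᵢ), γ(tᵢ₊₁)) : c = t₀ < ⋯ < t_N = d }`. -/
noncomputable def tauLen (γ : ℝ → X) (c d : ℝ) : ℝ≥0∞ :=
  ⨅ (N : ℕ) (t : ℕ → ℝ) (_ : IsPartition c d N t),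
    ∑ i ∈ Finset.range N, L.tau (γ (t i)) (γ (t (i + 1)))

/-- The `τ`-length of a curve on an arbitrary interval `I`, as the supremum of the lengths of its
restrictions to compact subintervals. -/
noncomputable def tauLenOn (γ : ℝ → X) (I : Set ℝ) : ℝ≥0∞ :=
  ⨆ (c : ℝ) (d : ℝ) (_ : c ≤ d) (_ : Icc c d ⊆ I), L.tauLen γ c d

/-- `γ : [c,d] → Ω` is maximal in `Ω`: no future-directed causal curve in `Ω` with the same
endpoints is longer. -/
def IsMaximalIn (γ : ℝ → X) (c d : ℝ) (Ω : Set X) : Prop :=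
  ∀ (σ : ℝ → X) (c' d' : ℝ), L.IsCausalOn σ (Icc c' d') → σ c' = γ c → σ d' = γ d →
    MapsTo σ (Icc c' d') Ω → L.tauLen σ c' d' ≤ L.tauLen γ c d

/-- A localising neighbourhood `Ω` of `x`, with local time separation function `ω`. -/
structure LocalisingNbhd (L : LorentzianPreLength X) (x : X) : Type u where
  Ω : Set X
  isOpen : IsOpen Ω
  mem : x ∈ Ω
  lengthBound : ∃ C : ℝ≥0∞, C < ∞ ∧ ∀ (γ : ℝ → X) (c d : ℝ), L.IsCausalOn γ (Icc c d) →
      MapsTo γ (Icc c d) Ω → eVariationOn γ (Icc c d) ≤ C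
  omega : X → X → ℝ≥0∞
  omega_lt_top : ∀ p ∈ Ω, ∀ q ∈ Ω, omega p q < ∞
  omega_cont : ContinuousOn (fun p : X × X => omega p.1 p.2) (Ω ×ˢ Ω)
  omega_rev_triangle : ∀ {p q r}, p ∈ Ω → q ∈ Ω → r ∈ Ω →
      L.causal p q → L.causal q r → omega p q + omega q r ≤ omega p r
  omega_eq_zero : ∀ {p q}, p ∈ Ω → q ∈ Ω → ¬ L.causal p q → omega p q = 0
  omega_pos_iff : ∀ {p q}, p ∈ Ω → q ∈ Ω → (0 < omega p q ↔ L.chron p q)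
  future_nonempty : ∀ y ∈ Ω, (L.chronFuture y ∩ Ω).Nonempty
  past_nonempty : ∀ y ∈ Ω, (L.chronPast y ∩ Ω).Nonempty
  max_curve : ∀ p ∈ Ω, ∀ q ∈ Ω, L.causal p q → p ≠ q →
    ∃ γ : ℝ → X, L.IsCausalOn γ (Icc 0 1) ∧ γ 0 = p ∧ γ 1 = q ∧
      MapsTo γ (Icc 0 1) Ω ∧ L.IsMaximalIn γ 0 1 Ω ∧
      L.tauLen γ 0 1 = omega p q ∧ omega p q ≤ L.tau p q

/-- The curve `γ` contains a null segment on `[c,d]`. -/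
def HasNullSegment (γ : ℝ → X) (c d : ℝ) : Prop :=
  ∃ s t : ℝ, c ≤ s ∧ s < t ∧ t ≤ d ∧
    ∀ ⦃u v : ℝ⦄, s ≤ u → u < v → v ≤ t → ¬ L.chron (γ u) (γ v)

/-- A localising neighbourhood is *regular* if maximal curves between timelike related points can
be chosen timelike and strictly longer than any causal curve containing a null segment. -/
def LocalisingNbhd.IsRegular {x : X} (Nb : L.LocalisingNbhd x) : Prop :=
  ∀ p ∈ Nb.Ω, ∀ q ∈ Nb.Ω, L.chron p q →
    ∃ γ : ℝ → X, L.IsTimelikeOn γ (Icc 0 1) ∧ γ 0 = p ∧ γ 1 = q ∧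
      MapsTo γ (Icc 0 1) Nb.Ω ∧ L.IsMaximalIn γ 0 1 Nb.Ω ∧
      L.tauLen γ 0 1 = Nb.omega p q ∧ Nb.omega p q ≤ L.tau p q ∧
      ∀ (σ : ℝ → X) (c d : ℝ), L.IsCausalOn σ (Icc c d) → σ c = p → σ d = q →
        MapsTo σ (Icc c d) Nb.Ω → L.HasNullSegment σ c d →
        L.tauLen σ c d < L.tauLen γ 0 1

/-- `X` is localisable: every point has a localising neighbourhood. -/
def Localisable : Prop := ∀ x : X, Nonempty (L.LocalisingNbhd x)

/-- `X` is regularly localisable. -/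
def RegularlyLocalisable : Prop := ∀ x : X, ∃ Nb : L.LocalisingNbhd x, Nb.IsRegular

/-- `X` is locally causally closed: every point has a neighbourhood `U` such that `≤` is closed
in `closure U × closure U`. -/
def LocallyCausallyClosed : Prop :=
  ∀ x : X, ∃ U ∈ 𝓝 x,
    IsClosed {p : X × X | p.1 ∈ closure U ∧ p.2 ∈ closure U ∧ L.causal p.1 p.2}

/-- `X` is causally path connected. -/
def CausallyPathConnected : Prop :=
  (∀ ⦃x y⦄, L.chron x y →
      ∃ γ : ℝ → X, L.IsTimelikeOn γ (Icc 0 1) ∧ γ 0 = x ∧ γ 1 = y) ∧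
  (∀ ⦃x y⦄, L.causal x y → x ≠ y →
      ∃ γ : ℝ → X, L.IsCausalOn γ (Icc 0 1) ∧ γ 0 = x ∧ γ 1 = y)

/-- `𝒯(x,y)`: the supremum of `τ`-lengths of future-directed causal curves from `x` to `y`
(`0` if there are none). -/
noncomputable def maxLen (x y : X) : ℝ≥0∞ :=
  ⨆ (γ : ℝ → X) (_ : L.IsCausalOn γ (Icc 0 1)) (_ : γ 0 = x) (_ : γ 1 = y), L.tauLen γ 0 1

/-- A *Lorentzian length space*: a locally causally closed, causally path connected, localisable
Lorentzian pre-length space with `τ = 𝒯`. -/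
structure IsLLS : Prop where
  locallyCausallyClosed : L.LocallyCausallyClosed
  causallyPathConnected : L.CausallyPathConnected
  localisable : L.Localisable
  tau_eq_maxLen : ∀ x y : X, L.tau x y = L.maxLen x y

/-- A *regular Lorentzian length space*. -/
def IsRegularLLS : Prop := L.IsLLS ∧ L.RegularlyLocalisable

/-- Strong causality: every point has arbitrarily small neighbourhoods which no causal curve
leaves and re-enters. -/
def StronglyCausal : Prop :=
  ∀ x : X, ∀ V ∈ 𝓝 x, ∃ U ∈ 𝓝 x, U ⊆ V ∧
    ∀ (γ : ℝ → X) (c d : ℝ), c ≤ d → L.IsCausalOn γ (Icc c d) →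
      γ c ∈ U → γ d ∈ U → MapsTo γ (Icc c d) V

/-- A (synthetic) geodesic: a future-directed causal curve which is locally maximal within
localising neighbourhoods. -/
def IsGeodesicOn (γ : ℝ → X) (I : Set ℝ) : Prop :=
  L.IsCausalOn γ I ∧
  ∀ t₀ ∈ I, ∃ (Nb : L.LocalisingNbhd (γ t₀)) (c d : ℝ),
    c ≤ t₀ ∧ t₀ ≤ d ∧ c < d ∧ Icc c d ⊆ I ∧ Icc c d ∈ 𝓝[I] t₀ ∧
    MapsTo γ (Icc c d) Nb.Ω ∧ L.IsMaximalIn γ c d Nb.Ω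

/-- A timelike (synthetic) geodesic. -/
def IsTimelikeGeodesicOn (γ : ℝ → X) (I : Set ℝ) : Prop :=
  L.IsGeodesicOn γ I ∧ L.IsTimelikeOn γ I

/-- An inextendible timelike geodesic: not the restriction of a timelike geodesic defined on a
strictly larger interval. -/
def IsInextTimelikeGeodesic (γ : ℝ → X) (I : Set ℝ) : Prop :=
  L.IsTimelikeGeodesicOn γ I ∧
  ∀ (γ' : ℝ → X) (I' : Set ℝ), I'.OrdConnected → I ⊆ I' → I ≠ I' →
    (∀ t ∈ I, γ' t = γ t) → ¬ L.IsTimelikeGeodesicOn γ' I'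

/-- Property (TC): all inextendible timelike geodesics have infinite `τ`-length. -/
def PropertyTC : Prop :=
  ∀ (γ : ℝ → X) (I : Set ℝ), I.OrdConnected → L.IsInextTimelikeGeodesic γ I →
    L.tauLenOn γ I = ∞

/-- An *extension* of the Lorentzian pre-length space `L` on `X` by the Lorentzian pre-length
space `L'` on `Y`: a metric isometry `ι` of `X` onto a proper open subset of the connected space
`Y` preserving the causal relations, timelike/causal curves and their `τ`-lengths. -/
structure Extension {Y : Type v} [MetricSpace Y] (L : LorentzianPreLength X)
    (L' : LorentzianPreLength Y) : Type (max u v) where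
  ι : X → Y
  connected : ConnectedSpace Y
  isometry : Isometry ι
  range_open : IsOpen (Set.range ι)
  range_ne_univ : Set.range ι ≠ Set.univ
  pres_causal : ∀ {x y}, L.causal x y → L'.causal (ι x) (ι y)
  pres_chron : ∀ {x y}, L.chron x y → L'.chron (ι x) (ι y)
  causal_iff : ∀ (γ : ℝ → X) (I : Set ℝ), I.OrdConnected →
      (L.IsCausalOn γ I ↔ L'.IsCausalOn (ι ∘ γ) I)
  timelike_iff : ∀ (γ : ℝ → X) (I : Set ℝ), I.OrdConnected →
      (L.IsTimelikeOn γ I ↔ L'.IsTimelikeOn (ι ∘ γ) I)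
  len_eq : ∀ (γ : ℝ → X) (c d : ℝ), L.IsCausalOn γ (Icc c d) →
      L.tauLen γ c d = L'.tauLen (ι ∘ γ) c d

/-!
On a localising neighbourhood `Ω`, maximal curves give `ω ≤ τ`. Conversely, strong causality
yields a neighbourhood `U ⊆ Ω` of `x` such that every causal curve between points of `U` stays in
`Ω`, so it is no longer than the maximal curve in `Ω`; as `τ = 𝒯` is the supremum of such lengths,
`τ ≤ ω` on `U`. Continuity of `ω` on `Ω × Ω` then passes to `τ` on each `U × U`.
-/

def CausallyConfinedIn (U V : Set X) : Prop :=
  ∀ (γ : ℝ → X) (c d : ℝ), c ≤ d → L.IsCausalOn γ (Icc c d) →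
    γ c ∈ U → γ d ∈ U → MapsTo γ (Icc c d) V

variable {L}

theorem IsCausalOn.causal_endpoints {γ : ℝ → X} {c d : ℝ} (hγ : L.IsCausalOn γ (Icc c d))
    (hcd : c < d) : L.causal (γ c) (γ d) :=
  hγ.2.1 (left_mem_Icc.2 hcd.le) (right_mem_Icc.2 hcd.le) hcd

theorem StronglyCausal.apply_ne_of_isCausalOn (hSC : L.StronglyCausal) {γ : ℝ → X} {c d : ℝ}
    (hγ : L.IsCausalOn γ (Icc c d)) (hcd : c ≤ d) : γ c ≠ γ d := by
  intro hloop
  obtain ⟨r, hr, hrc⟩ : ∃ r ∈ Icc c d, γ r ≠ γ c := by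
    obtain ⟨s, hs, t, ht, hst⟩ := hγ.2.2
    by_contra! hconst
    exact hst ((hconst s hs).trans (hconst t ht).symm)
  -- a neighbourhood of `γ c` avoiding `γ r` would have to contain the whole loop
  obtain ⟨U, hU, -, hconf⟩ := hSC (γ c) {γ r}ᶜ (isOpen_compl_singleton.mem_nhds hrc.symm)
  exact hconf γ c d hcd hγ (mem_of_mem_nhds hU) (hloop ▸ mem_of_mem_nhds hU) hr rfl

namespace LocalisingNbhd

variable {x : X} (Nb : L.LocalisingNbhd x)

theorem omega_self {p : X} (hp : p ∈ Nb.Ω) : Nb.omega p p = 0 := by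
  have h : Nb.omega p p + Nb.omega p p ≤ 0 + Nb.omega p p := by
    rw [zero_add]
    exact Nb.omega_rev_triangle hp hp hp (L.causal_refl p) (L.causal_refl p)
  exact nonpos_iff_eq_zero.1
    ((ENNReal.add_le_add_iff_right (Nb.omega_lt_top p hp p hp).ne).1 h)

theorem omega_le_tau {p q : X} (hp : p ∈ Nb.Ω) (hq : q ∈ Nb.Ω) :
    Nb.omega p q ≤ L.tau p q := by
  by_cases hc : L.causal p q
  · rcases eq_or_ne p q with rfl | hpq
    · simp [Nb.omega_self hp]
    · obtain ⟨-, -, -, -, -, -, -, hle⟩ := Nb.max_curve p hp q hq hc hpq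
      exact hle
  · simp [Nb.omega_eq_zero hp hq hc]

theorem maxLen_le_omega (hSC : L.StronglyCausal) {U : Set X} (hUΩ : U ⊆ Nb.Ω)
    (hU : L.CausallyConfinedIn U Nb.Ω) {p q : X} (hp : p ∈ U) (hq : q ∈ U) :
    L.maxLen p q ≤ Nb.omega p q := by
  refine iSup_le fun γ => iSup_le fun hγ => iSup_le fun h0 => iSup_le fun h1 => ?_
  subst h0 h1
  obtain ⟨γ₀, -, h00, h01, -, hmax, hlen, -⟩ :=
    Nb.max_curve _ (hUΩ hp) _ (hUΩ hq) (hγ.causal_endpoints one_pos)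
      (hSC.apply_ne_of_isCausalOn hγ zero_le_one)
  calc L.tauLen γ 0 1 ≤ L.tauLen γ₀ 0 1 :=
        hmax γ 0 1 hγ h00.symm h01.symm (hU γ 0 1 zero_le_one hγ hp hq)
    _ = Nb.omega (γ 0) (γ 1) := hlen

theorem exists_nhds_omega_eq_tau (hSC : L.StronglyCausal)
    (htau : ∀ p q : X, L.tau p q = L.maxLen p q) :
    ∃ U ∈ 𝓝 x, U ⊆ Nb.Ω ∧ ∀ p ∈ U, ∀ q ∈ U, Nb.omega p q = L.tau p q := by
  obtain ⟨U, hU, hUΩ, hconf⟩ := hSC x Nb.Ω (Nb.isOpen.mem_nhds Nb.mem)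
  refine ⟨U, hU, hUΩ, fun p hp q hq => le_antisymm (Nb.omega_le_tau (hUΩ hp) (hUΩ hq)) ?_⟩
  exact htau p q ▸ Nb.maxLen_le_omega hSC hUΩ hconf hp hq

end LocalisingNbhd

end LorentzianPreLength

theorem exists_isOpen_diagonal_continuousOn {X β : Type*} [TopologicalSpace X]
    [TopologicalSpace β] {f : X × X → β} (h : ∀ x, ∃ U ∈ 𝓝 x, ContinuousOn f (U ×ˢ U)) :
    ∃ W : Set (X × X), IsOpen W ∧ (∀ x : X, (x, x) ∈ W) ∧ ContinuousOn f W := by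
  choose U hU hf using h
  have hopen : ∀ x, IsOpen (interior (U x) ×ˢ interior (U x)) := fun x =>
    isOpen_interior.prod isOpen_interior
  refine ⟨⋃ x, interior (U x) ×ˢ interior (U x), isOpen_iUnion hopen,
    fun x => mem_iUnion.2 ⟨x, mem_interior_iff_mem_nhds.2 (hU x),
      mem_interior_iff_mem_nhds.2 (hU x)⟩, ?_⟩
  exact ContinuousOn.iUnion_of_isOpen
    (fun x => (hf x).mono (prod_mono interior_subset interior_subset)) hopen

/-- In a strongly causal Lorentzian length space, for every `x` and every
localising neighbourhood `Ω` of `x` with local time separation `ω`, there is a neighbourhood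
`U ⊆ Ω` of `x` on which `ω = τ`; in particular `τ` is continuous on a neighbourhood of the
diagonal of `X × X`. -/
theorem local_timeSep_eq_tau {X : Type u} [MetricSpace X] (L : LorentzianPreLength X)
    (hSC : L.StronglyCausal) (hL : L.IsLLS) :
    (∀ (x : X) (Nb : L.LocalisingNbhd x), ∃ U ∈ 𝓝 x, U ⊆ Nb.Ω ∧
        ∀ p ∈ U, ∀ q ∈ U, Nb.omega p q = L.tau p q) ∧
    ∃ W : Set (X × X), IsOpen W ∧ (∀ x : X, (x, x) ∈ W) ∧
      ContinuousOn (fun p : X × X => L.tau p.1 p.2) W := by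
  have hlocal : ∀ (x : X) (Nb : L.LocalisingNbhd x), ∃ U ∈ 𝓝 x, U ⊆ Nb.Ω ∧
      ∀ p ∈ U, ∀ q ∈ U, Nb.omega p q = L.tau p q := fun x Nb =>
    Nb.exists_nhds_omega_eq_tau hSC hL.tau_eq_maxLen
  refine ⟨hlocal, exists_isOpen_diagonal_continuousOn fun x => ?_⟩
  obtain ⟨Nb⟩ := hL.localisable x
  obtain ⟨U, hU, hUΩ, heq⟩ := hlocal x Nb
  exact ⟨U, hU, (Nb.omega_cont.mono (prod_mono hUΩ hUΩ)).congr fun p hp =>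
    (heq p.1 hp.1 p.2 hp.2).symm⟩
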